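/- Let L(n) = {(k_1,k_2) ∈ ℤ² : k_1 + b_{n-1}k_2 ≡ 0 (mod b_n)} and let t_0 be the smallest natural number with 2^{t_0} > γ b_n, where γ is the constant from the hyperbolic cross lemma. Then there is an absolute constant C_2 such that for every t ≥ t_0 and every s = (s_1, s_2) ∈ ℕ_0² with s_1 + s_2 = t, the dyadic block ρ(s) := {k ∈ ℤ² : [2^{s_j - 1}] ≤ |k_j| < 2^{s_j}, j = 1,2} satisfies #(ρ(s) ∩ L(n)) ≤ C_2 · 2^{t - t_0}. -/
import Mathlib


def fibb : ℕ → ℕ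
  | 0 => 1
  | 1 => 1
  | (n + 2) => fibb (n + 1) + fibb n

/-- the lower endpoint `[2^{s-1}]` of a dyadic block. -/
def dyLow (s : ℕ) : ℕ := if s = 0 then 0 else 2 ^ (s - 1)

/-- dyadic block `ρ(s)` intersected with the Fibonacci lattice `L(n)`. -/
def rhoL (n s₁ s₂ : ℕ) : Set (ℤ × ℤ) :=
  {k : ℤ × ℤ | (dyLow s₁ : ℤ) ≤ |k.1| ∧ |k.1| < 2 ^ s₁ ∧
               (dyLow s₂ : ℤ) ≤ |k.2| ∧ |k.2| < 2 ^ s₂ ∧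
               (fibb n : ℤ) ∣ (k.1 + (fibb (n - 1) : ℤ) * k.2)}

theorem fibb_pos : ∀ n, 0 < fibb n
  | 0 => Nat.one_pos
  | 1 => Nat.one_pos
  | (n + 2) => Nat.add_pos_left (fibb_pos (n + 1)) _

lemma toNat_cast_le_real {a : ℤ} {b : ℝ} (h : (a : ℝ) ≤ b) (hb : 0 ≤ b) :
    ((a.toNat : ℕ) : ℝ) ≤ b := by
  rcases le_or_gt a 0 with h0 | h0
  · have : a.toNat = 0 := Int.toNat_of_nonpos h0
    simp [this, hb]
  · have : ((a.toNat : ℕ) : ℝ) = (a : ℝ) := by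
      rw [← Int.cast_natCast, Int.toNat_of_nonneg h0.le]
    rw [this]; exact h

/-- key separation lemma from the hyperbolic cross assumption -/
lemma key_diff (γ : ℝ)
    (hcross : ∀ n : ℕ, 2 < n → ∀ k : ℤ × ℤ, k ≠ 0 →
      (fibb n : ℤ) ∣ (k.1 + (fibb (n - 1) : ℤ) * k.2) →
      ¬ (max |(k.1 : ℝ)| 1 * max |(k.2 : ℝ)| 1 ≤ γ * (fibb n : ℝ)))
    {n s₁ s₂ : ℕ} (hn : 2 < n) {k k' : ℤ × ℤ}
    (hk : k ∈ rhoL n s₁ s₂) (hk' : k' ∈ rhoL n s₁ s₂) (hne : k ≠ k') :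
    γ * (fibb n : ℝ) < 2 ^ (s₁ + 1) * max |((k.2 - k'.2 : ℤ) : ℝ)| 1 := by
  obtain ⟨-, h1, -, h2, h3⟩ := hk
  obtain ⟨-, h1', -, h2', h3'⟩ := hk'
  have hd0 : k - k' ≠ 0 := sub_ne_zero.mpr hne
  have hdvd : (fibb n : ℤ) ∣ ((k - k').1 + (fibb (n - 1) : ℤ) * (k - k').2) := by
    have h := dvd_sub h3 h3'
    have he : (k.1 + (fibb (n-1) : ℤ) * k.2) - (k'.1 + (fibb (n-1) : ℤ) * k'.2)
        = (k - k').1 + (fibb (n - 1) : ℤ) * (k - k').2 := by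
      simp [Prod.fst_sub, Prod.snd_sub]; ring
    rwa [he] at h
  have h := hcross n hn (k - k') hd0 hdvd
  push_neg at h
  have habs : |((k - k').1 : ℝ)| ≤ 2 ^ (s₁ + 1) := by
    have hZ : |k.1 - k'.1| ≤ 2 ^ (s₁ + 1) := by
      have h := abs_sub k.1 k'.1
      have hp : (2:ℤ) ^ (s₁ + 1) = 2 ^ s₁ + 2 ^ s₁ := by rw [pow_succ]; ring
      omega
    have hfst : (((k - k').1 : ℤ) : ℝ) = ((k.1 - k'.1 : ℤ) : ℝ) := by
      simp [Prod.fst_sub]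
    calc |((k - k').1 : ℝ)| = ((|k.1 - k'.1| : ℤ) : ℝ) := by
          rw [hfst, Int.cast_abs]
      _ ≤ (((2:ℤ) ^ (s₁ + 1) : ℤ) : ℝ) := by exact_mod_cast hZ
      _ = 2 ^ (s₁ + 1) := by push_cast; ring
  have hmax1 : max |((k - k').1 : ℝ)| 1 ≤ 2 ^ (s₁ + 1) :=
    max_le habs (one_le_pow₀ (by norm_num))
  have hmax2nonneg : (0:ℝ) ≤ max |((k - k').2 : ℝ)| 1 :=
    le_trans zero_le_one (le_max_right _ _)
  have hsnd : ((k - k').2 : ℤ) = k.2 - k'.2 := rfl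
  calc γ * (fibb n : ℝ) < max |((k - k').1 : ℝ)| 1 * max |((k - k').2 : ℝ)| 1 := h
    _ ≤ 2 ^ (s₁ + 1) * max |((k - k').2 : ℝ)| 1 :=
        mul_le_mul_of_nonneg_right hmax1 hmax2nonneg
    _ = 2 ^ (s₁ + 1) * max |((k.2 - k'.2 : ℤ) : ℝ)| 1 := by rw [hsnd]

set_option maxHeartbeats 2000000 in
theorem stmt9 (γ : ℝ) (hγ : 0 < γ)
    (hcross : ∀ n : ℕ, 2 < n → ∀ k : ℤ × ℤ, k ≠ 0 →
      (fibb n : ℤ) ∣ (k.1 + (fibb (n - 1) : ℤ) * k.2) →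
      ¬ (max |(k.1 : ℝ)| 1 * max |(k.2 : ℝ)| 1 ≤ γ * (fibb n : ℝ))) :
    ∃ C₂ : ℝ, 0 < C₂ ∧ ∀ n : ℕ, 2 < n → ∀ t₀ : ℕ,
      IsLeast {t : ℕ | γ * (fibb n : ℝ) < 2 ^ t} t₀ →
      ∀ t : ℕ, t₀ ≤ t → ∀ s₁ s₂ : ℕ, s₁ + s₂ = t →
        ((rhoL n s₁ s₂).ncard : ℝ) ≤ C₂ * 2 ^ (t - t₀) := by
  refine ⟨8 * γ + 16, by positivity, ?_⟩
  intro n hn t₀ ht₀ t ht s₁ s₂ hs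
  have hFpos : (0:ℝ) < (fibb n : ℝ) := by exact_mod_cast fibb_pos n
  have hb : (0:ℤ) < (fibb n : ℤ) := by exact_mod_cast fibb_pos n
  have hpow_sub : (2:ℝ) ^ (t - t₀) * 2 ^ t₀ = 2 ^ t := by
    rw [← pow_add, Nat.sub_add_cancel ht]
  have hone_le : (1:ℝ) ≤ 2 ^ (t - t₀) := one_le_pow₀ (by norm_num)
  have hpowpos : (0:ℝ) < 2 ^ (t - t₀) := by positivity
  rcases Nat.eq_zero_or_pos t₀ with ht₀0 | ht₀1
  · -- trivial case t₀ = 0 : crude bound 4 * 2^t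
    subst ht₀0
    have hcard : (rhoL n s₁ s₂).ncard ≤
        ((Finset.Icc (-(2 ^ s₁ - 1) : ℤ) (2 ^ s₁ - 1)) ×ˢ
         (Finset.Icc (-(2 ^ s₂ - 1) : ℤ) (2 ^ s₂ - 1))).card := by
      rw [← Set.ncard_coe_finset]
      apply Set.ncard_le_ncard_of_injOn (fun k => k)
      · intro k hk
        obtain ⟨-, h1, -, h2, -⟩ := hk
        rw [abs_lt] at h1 h2
        simp only [Finset.coe_product, Set.mem_prod, Finset.mem_coe, Finset.mem_Icc]
        exact ⟨⟨by omega, by omega⟩, by omega, by omega⟩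
      · exact fun a _ b _ h => h
    have hc : (((Finset.Icc (-(2 ^ s₁ - 1) : ℤ) (2 ^ s₁ - 1)) ×ˢ
        (Finset.Icc (-(2 ^ s₂ - 1) : ℤ) (2 ^ s₂ - 1))).card : ℝ)
        ≤ 2 ^ (s₁ + 1) * 2 ^ (s₂ + 1) := by
      rw [Finset.card_product, Int.card_Icc, Int.card_Icc]
      have e₁ : ((2:ℤ) ^ s₁ - 1 + 1 - -(2 ^ s₁ - 1)) = 2 * 2 ^ s₁ - 1 := by ring
      have e₂ : ((2:ℤ) ^ s₂ - 1 + 1 - -(2 ^ s₂ - 1)) = 2 * 2 ^ s₂ - 1 := by ring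
      rw [e₁, e₂]
      push_cast
      have b₁ : (((2 * 2 ^ s₁ - 1 : ℤ).toNat : ℕ) : ℝ) ≤ 2 ^ (s₁ + 1) := by
        apply toNat_cast_le_real
        · push_cast; rw [pow_succ]; nlinarith [pow_pos (by norm_num : (0:ℝ) < 2) s₁]
        · positivity
      have b₂ : (((2 * 2 ^ s₂ - 1 : ℤ).toNat : ℕ) : ℝ) ≤ 2 ^ (s₂ + 1) := by
        apply toNat_cast_le_real
        · push_cast; rw [pow_succ]; nlinarith [pow_pos (by norm_num : (0:ℝ) < 2) s₂]
        · positivity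
      exact mul_le_mul b₁ b₂ (by positivity) (by positivity)
    have hmain : ((rhoL n s₁ s₂).ncard : ℝ) ≤ 2 ^ (s₁ + 1) * 2 ^ (s₂ + 1) :=
      le_trans (Nat.cast_le.mpr hcard) hc
    have he : (2:ℝ) ^ (s₁ + 1) * 2 ^ (s₂ + 1) = 4 * 2 ^ t := by
      rw [← pow_add, show s₁ + 1 + (s₂ + 1) = t + 2 by omega, pow_add]; ring
    have hfin : (4:ℝ) * 2 ^ t ≤ (8 * γ + 16) * 2 ^ (t - 0) := by
      simp only [Nat.sub_zero]
      nlinarith [pow_pos (by norm_num : (0:ℝ) < 2) t]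
    linarith [hmain, he ▸ hmain]
  · -- t₀ ≥ 1
    have hlow : (2:ℝ) ^ (t₀ - 1) ≤ γ * (fibb n : ℝ) := by
      by_contra hcon
      push_neg at hcon
      have : t₀ ≤ t₀ - 1 := ht₀.2 hcon
      omega
    have hγF : (0:ℝ) < γ * (fibb n : ℝ) := by positivity
    have hγF2 : γ * (fibb n : ℝ) ≥ 2 ^ t₀ / 2 := by
      have : (2:ℝ) ^ (t₀ - 1) * 2 = 2 ^ t₀ := by
        rw [← pow_succ, show t₀ - 1 + 1 = t₀ by omega]
      linarith
    by_cases hA : γ * (fibb n : ℝ) ≤ 2 ^ (s₁ + 1)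
    · -- CASE A : count per k₂ using division by fibb n
      set Q : ℤ := (2 ^ (s₁ + 1) - 1) / (fibb n : ℤ) with hQdef
      have hcard : (rhoL n s₁ s₂).ncard ≤
          ((Finset.Icc (-(2 ^ s₂ - 1) : ℤ) (2 ^ s₂ - 1)) ×ˢ (Finset.Icc (0:ℤ) Q)).card := by
        rw [← Set.ncard_coe_finset]
        apply Set.ncard_le_ncard_of_injOn
          (fun k => (k.2, (k.1 + 2 ^ s₁) / (fibb n : ℤ)))
        · intro k hk
          obtain ⟨-, h1, -, h2, -⟩ := hk
          rw [abs_lt] at h1 h2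
          simp only [Finset.coe_product, Set.mem_prod, Finset.mem_coe, Finset.mem_Icc]
          have hk1lb : (0:ℤ) ≤ k.1 + 2 ^ s₁ := by omega
          have hk1ub : k.1 + 2 ^ s₁ ≤ 2 ^ (s₁ + 1) - 1 := by
            have hp : (2:ℤ) ^ (s₁ + 1) = 2 ^ s₁ + 2 ^ s₁ := by rw [pow_succ]; ring
            omega
          exact ⟨⟨by omega, by omega⟩,
            Int.ediv_nonneg hk1lb hb.le, Int.ediv_le_ediv hb hk1ub⟩
        · intro k hk k' hk' hfeq
          obtain ⟨-, -, -, -, h3⟩ := hk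
          obtain ⟨-, -, -, -, h3'⟩ := hk'
          simp only [Prod.mk.injEq] at hfeq
          obtain ⟨h2eq, hqeq⟩ := hfeq
          have hdvd : (fibb n : ℤ) ∣ (k.1 + 2 ^ s₁) - (k'.1 + 2 ^ s₁) := by
            have h := dvd_sub h3 h3'
            have he : (k.1 + (fibb (n-1) : ℤ) * k.2) - (k'.1 + (fibb (n-1) : ℤ) * k'.2)
                = (k.1 + 2 ^ s₁) - (k'.1 + 2 ^ s₁) := by rw [h2eq]; ring
            rwa [he] at h
          have hmod : (k.1 + 2 ^ s₁) % (fibb n : ℤ) = (k'.1 + 2 ^ s₁) % (fibb n : ℤ) :=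
            Int.emod_eq_emod_iff_emod_sub_eq_zero.mpr (Int.emod_eq_zero_of_dvd hdvd)
          have hx := Int.mul_ediv_add_emod (k.1 + 2 ^ s₁) (fibb n : ℤ)
          have hy := Int.mul_ediv_add_emod (k'.1 + 2 ^ s₁) (fibb n : ℤ)
          rw [hqeq, hmod] at hx
          have hk1 : k.1 = k'.1 := by linarith [hx, hy]
          exact Prod.ext hk1 h2eq
      have hQb : (Q : ℝ) ≤ 2 ^ (s₁ + 1) / (fibb n : ℝ) := by
        have h1 : Q * (fibb n : ℤ) ≤ 2 ^ (s₁ + 1) - 1 := Int.ediv_mul_le _ hb.ne'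
        have h1' : (Q : ℝ) * (fibb n : ℝ) ≤ 2 ^ (s₁ + 1) - 1 := by exact_mod_cast h1
        rw [le_div_iff₀ hFpos]
        linarith
      have hQ0 : (0:ℤ) ≤ Q := by
        apply Int.ediv_nonneg _ hb.le
        have h1 : (1:ℤ) ≤ 2 ^ (s₁ + 1) := one_le_pow₀ (by norm_num)
        omega
      have hc : (((Finset.Icc (-(2 ^ s₂ - 1) : ℤ) (2 ^ s₂ - 1)) ×ˢ
          (Finset.Icc (0:ℤ) Q)).card : ℝ)
          ≤ 2 ^ (s₂ + 1) * (2 ^ (s₁ + 1) / (fibb n : ℝ) + 1) := by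
        rw [Finset.card_product, Int.card_Icc, Int.card_Icc]
        have e₂ : ((2:ℤ) ^ s₂ - 1 + 1 - -(2 ^ s₂ - 1)) = 2 * 2 ^ s₂ - 1 := by ring
        rw [e₂]
        push_cast
        have b₂ : (((2 * 2 ^ s₂ - 1 : ℤ).toNat : ℕ) : ℝ) ≤ 2 ^ (s₂ + 1) := by
          apply toNat_cast_le_real
          · push_cast; rw [pow_succ]; nlinarith [pow_pos (by norm_num : (0:ℝ) < 2) s₂]
          · positivity
        have bQ : (((Q + 1 - 0 : ℤ).toNat : ℕ) : ℝ) ≤ 2 ^ (s₁ + 1) / (fibb n : ℝ) + 1 := by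
          apply toNat_cast_le_real
          · push_cast; linarith
          · positivity
        exact mul_le_mul b₂ bQ (by positivity) (by positivity)
      have hmain : ((rhoL n s₁ s₂).ncard : ℝ)
          ≤ 2 ^ (s₂ + 1) * (2 ^ (s₁ + 1) / (fibb n : ℝ) + 1) :=
        le_trans (Nat.cast_le.mpr hcard) hc
      -- final arithmetic for case A
      have hfirst : (2:ℝ) ^ (s₂ + 1) * (2 ^ (s₁ + 1) / (fibb n : ℝ))
          ≤ 8 * γ * 2 ^ (t - t₀) := by
        have hprod : (2:ℝ) ^ (s₂ + 1) * 2 ^ (s₁ + 1) = 4 * 2 ^ t := by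
          rw [← pow_add, show s₂ + 1 + (s₁ + 1) = t + 2 by omega, pow_add]; ring
        have hFlb : 2 ^ t₀ / (2 * γ) ≤ (fibb n : ℝ) := by
          rw [div_le_iff₀ (by positivity)]
          nlinarith
        have hFge : (0:ℝ) < 2 ^ t₀ / (2 * γ) := by positivity
        have step1 : (2:ℝ) ^ (s₂ + 1) * (2 ^ (s₁ + 1) / (fibb n : ℝ))
            = 4 * 2 ^ t / (fibb n : ℝ) := by rw [mul_div_assoc', hprod]
        have step2 : (4:ℝ) * 2 ^ t / (fibb n : ℝ) ≤ 4 * 2 ^ t / (2 ^ t₀ / (2 * γ)) :=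
          div_le_div_of_nonneg_left (by positivity) hFge hFlb
        have step3 : (4:ℝ) * 2 ^ t / (2 ^ t₀ / (2 * γ)) = 8 * γ * 2 ^ (t - t₀) := by
          rw [← hpow_sub]
          field_simp
          ring
        rw [step1, ← step3] at *
        linarith
      have hsecond : (2:ℝ) ^ (s₂ + 1) ≤ 8 * 2 ^ (t - t₀) := by
        have hts : (2:ℝ) ^ (t₀ - 1) ≤ 2 ^ (s₁ + 1) := le_trans hlow hA
        have hexp : t₀ - 1 ≤ s₁ + 1 := by
          by_contra hcon
          push_neg at hcon
          have := pow_lt_pow_right₀ (by norm_num : (1:ℝ) < 2) hcon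
          linarith
        have hs2 : s₂ + 1 ≤ t - t₀ + 3 := by omega
        have h8 : (2:ℝ) ^ (t - t₀ + 3) = 8 * 2 ^ (t - t₀) := by rw [pow_add]; ring
        have := pow_le_pow_right₀ (by norm_num : (1:ℝ) ≤ 2) hs2
        linarith [h8 ▸ this]
      have hsplit : (2:ℝ) ^ (s₂ + 1) * (2 ^ (s₁ + 1) / (fibb n : ℝ) + 1)
          = 2 ^ (s₂ + 1) * (2 ^ (s₁ + 1) / (fibb n : ℝ)) + 2 ^ (s₂ + 1) := by ring
      nlinarith [hmain, hfirst, hsecond, hsplit, hpowpos]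
    · -- CASE B : separation of k₂-values via the cross lemma
      push_neg at hA
      obtain ⟨M, hMdef⟩ : ∃ M : ℤ,
          M = ⌊(2 ^ (s₂ + 1) : ℝ) * 2 ^ (s₁ + 1) / (γ * (fibb n : ℝ))⌋ := ⟨_, rfl⟩
      have hcard : (rhoL n s₁ s₂).ncard ≤ (Finset.Icc (0:ℤ) M).card := by
        rw [← Set.ncard_coe_finset]
        apply Set.ncard_le_ncard_of_injOn
          (fun k => ⌊((k.2 + 2 ^ s₂ : ℤ) : ℝ) * 2 ^ (s₁ + 1) / (γ * (fibb n : ℝ))⌋)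
        · intro k hk
          obtain ⟨-, -, -, h2, -⟩ := hk
          rw [abs_lt] at h2
          simp only [Finset.mem_coe, Finset.mem_Icc]
          have hlb : (0:ℤ) ≤ k.2 + 2 ^ s₂ := by omega
          have hub : k.2 + 2 ^ s₂ ≤ 2 ^ (s₂ + 1) := by
            have hp : (2:ℤ) ^ (s₂ + 1) = 2 ^ s₂ + 2 ^ s₂ := by rw [pow_succ]; ring
            omega
          constructor
          · apply Int.floor_nonneg.mpr
            apply div_nonneg _ hγF.le
            apply mul_nonneg _ (by positivity)
            exact_mod_cast hlb
          · rw [hMdef]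
            apply Int.floor_le_floor
            have hnum : ((k.2 + 2 ^ s₂ : ℤ) : ℝ) ≤ (2 ^ (s₂ + 1) : ℝ) := by
              exact_mod_cast hub
            exact (div_le_div_iff_of_pos_right hγF).mpr
              (mul_le_mul_of_nonneg_right hnum (by positivity))
        · intro k hk k' hk' hfeq
          by_contra hne
          have hd := key_diff γ hcross hn hk hk' hne
          have hd2ne : k.2 - k'.2 ≠ 0 := by
            intro h0
            rw [h0] at hd
            have hone : max |((0:ℤ):ℝ)| 1 = 1 := by norm_num
            rw [hone, mul_one] at hd
            linarith
          have hd2ge : (1:ℝ) ≤ |((k.2 - k'.2 : ℤ) : ℝ)| := by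
            have h1 : (1:ℤ) ≤ |k.2 - k'.2| := Int.one_le_abs hd2ne
            have : ((1:ℤ) : ℝ) ≤ ((|k.2 - k'.2| : ℤ) : ℝ) := by exact_mod_cast h1
            rwa [Int.cast_abs, Int.cast_one] at this
          have hmax : max |((k.2 - k'.2 : ℤ) : ℝ)| 1 = |((k.2 - k'.2 : ℤ) : ℝ)| :=
            max_eq_left hd2ge
          rw [hmax] at hd
          have hflt := Int.abs_sub_lt_one_of_floor_eq_floor hfeq
          have heq : ((k.2 + 2 ^ s₂ : ℤ) : ℝ) * 2 ^ (s₁ + 1) / (γ * (fibb n : ℝ))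
              - ((k'.2 + 2 ^ s₂ : ℤ) : ℝ) * 2 ^ (s₁ + 1) / (γ * (fibb n : ℝ))
              = ((k.2 - k'.2 : ℤ) : ℝ) * 2 ^ (s₁ + 1) / (γ * (fibb n : ℝ)) := by
            push_cast; ring
          rw [heq] at hflt
          have habs : |((k.2 - k'.2 : ℤ) : ℝ) * 2 ^ (s₁ + 1) / (γ * (fibb n : ℝ))|
              = |((k.2 - k'.2 : ℤ) : ℝ)| * 2 ^ (s₁ + 1) / (γ * (fibb n : ℝ)) := by
            rw [abs_div, abs_mul, abs_of_pos (by positivity : (0:ℝ) < (2:ℝ) ^ (s₁ + 1)),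
              abs_of_pos hγF]
          rw [habs] at hflt
          have hgt : (1:ℝ) < |((k.2 - k'.2 : ℤ) : ℝ)| * 2 ^ (s₁ + 1) / (γ * (fibb n : ℝ)) := by
            rw [lt_div_iff₀ hγF]
            nlinarith
          linarith
      have hM0 : (0:ℤ) ≤ M := by
        rw [hMdef]
        apply Int.floor_nonneg.mpr
        positivity
      have hMle : (M : ℝ) ≤ (2 ^ (s₂ + 1) : ℝ) * 2 ^ (s₁ + 1) / (γ * (fibb n : ℝ)) := by
        rw [hMdef]
        exact Int.floor_le _
      have hc2 : ((Finset.Icc (0:ℤ) M).card : ℝ)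
          ≤ (2 ^ (s₂ + 1) : ℝ) * 2 ^ (s₁ + 1) / (γ * (fibb n : ℝ)) + 1 := by
        rw [Int.card_Icc]
        apply toNat_cast_le_real
        · push_cast; linarith
        · positivity
      have hmain : ((rhoL n s₁ s₂).ncard : ℝ)
          ≤ (2 ^ (s₂ + 1) : ℝ) * 2 ^ (s₁ + 1) / (γ * (fibb n : ℝ)) + 1 :=
        le_trans (Nat.cast_le.mpr hcard) hc2
      have hprod : (2:ℝ) ^ (s₂ + 1) * 2 ^ (s₁ + 1) = 4 * 2 ^ t := by
        rw [← pow_add, show s₂ + 1 + (s₁ + 1) = t + 2 by omega, pow_add]; ring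
      have hterm : (2:ℝ) ^ (s₂ + 1) * 2 ^ (s₁ + 1) / (γ * (fibb n : ℝ))
          ≤ 8 * 2 ^ (t - t₀) := by
        have hDlb : (0:ℝ) < 2 ^ t₀ / 2 := by positivity
        have step2 : (4:ℝ) * 2 ^ t / (γ * (fibb n : ℝ)) ≤ 4 * 2 ^ t / (2 ^ t₀ / 2) :=
          div_le_div_of_nonneg_left (by positivity) hDlb hγF2
        have step3 : (4:ℝ) * 2 ^ t / (2 ^ t₀ / 2) = 8 * 2 ^ (t - t₀) := by
          rw [← hpow_sub]
          field_simp
          ring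
        rw [hprod, ← step3]
        linarith
      nlinarith [hmain, hterm, hone_le, hpowpos]
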